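/- arXiv:1109.6180 — 2 statements merged into one kernel-verified Lean document; each statement's English description precedes it below -/
import Mathlib

section
/- Let p ≥ 3 be an odd integer. The Hilbert ideal I_H is generated by invariants of positive degree at most p; that is, I_H equals the ideal of R generated by the homogeneous G-invariant polynomials f with 0 < deg f ≤ p. -/
open MvPolynomial

noncomputable section

abbrev DVar (r s : ℕ) := (Fin r ⊕ Fin r) ⊕ (Fin s ⊕ Fin s)

def dswap {r s : ℕ} : DVar r s → DVar r s
  | .inl (.inl i) => .inl (.inr i)
  | .inl (.inr i) => .inl (.inl i)
  | .inr (.inl j) => .inr (.inr j)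
  | .inr (.inr j) => .inr (.inl j)

def sigmaMap (F : Type*) [Field F] (r s : ℕ) :
    MvPolynomial (DVar r s) F →ₐ[F] MvPolynomial (DVar r s) F :=
  MvPolynomial.rename dswap

def rhoCoeff {F : Type*} [Field F] {r s : ℕ} (lam : Fin r → F) : DVar r s → F
  | .inl (.inl i) => lam i
  | .inl (.inr i) => (lam i)⁻¹
  | .inr _ => 1

def rhoMap (F : Type*) [Field F] (r s : ℕ) (lam : Fin r → F) :
    MvPolynomial (DVar r s) F →ₐ[F] MvPolynomial (DVar r s) F :=
  MvPolynomial.aeval fun v => MvPolynomial.C (rhoCoeff lam v) * MvPolynomial.X v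

def HilbertIdeal (F : Type*) [Field F] (r s : ℕ) (lam : Fin r → F) :
    Ideal (MvPolynomial (DVar r s) F) :=
  Ideal.span {f | sigmaMap F r s f = f ∧ rhoMap F r s lam f = f ∧ constantCoeff f = 0}

def IsMonomial {σ F : Type*} [CommSemiring F] (f : MvPolynomial σ F) : Prop :=
  ∃ d : σ →₀ ℕ, f = monomial d 1

def GSet (F : Type*) [Field F] (r s p : ℕ) (lam : Fin r → F) :
    Set (MvPolynomial (DVar r s) F) :=
  {f | ∃ m, IsMonomial m ∧ rhoMap F r s lam m = m ∧ sigmaMap F r s m ≠ m ∧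
      m.totalDegree ≤ p ∧ f = m + sigmaMap F r s m} ∪
  {f | ∃ (m : MvPolynomial (DVar r s) F) (v : DVar r s), IsMonomial m ∧ rhoMap F r s lam m = m ∧ m.totalDegree ≤ p ∧
      X v ∣ m ∧ f = X v * m} ∪
  {f | (∃ i : Fin r, f = X (Sum.inl (Sum.inl i)) * X (Sum.inl (Sum.inr i))) ∨
       (∃ j : Fin s, f = X (Sum.inr (Sum.inl j)) * X (Sum.inr (Sum.inr j)))}

def lmExp {σ F : Type*} [CommSemiring F] (mo : MonomialOrder σ) (f : MvPolynomial σ F) :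
    σ →₀ ℕ :=
  mo.toSyn.symm (f.support.sup fun d => mo.toSyn d)

/-!
A nonzero exponent `d` of weight one under `ρ` contributes either a `σ`-fixed monomial `X^d` or an
orbit sum `X^d + X^σd` to an invariant, and these span the invariants of positive degree. A fixed
`X^d` is divisible by the degree-two invariant `x_v x_σv`. For an orbit sum of degree `> p`, the
`p + 1` prefix products of the `p`-th roots of unity attached to the variables of `X^d` cannot all
be distinct, so `d = e + e'` with `X^e` of weight one and `0 < deg e ≤ p`; in characteristic two
`X^d + X^σd = (X^e + X^σe) X^e' + X^σe (X^e' + X^σe')`, and induction on the degree finishes.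
-/

section MonomialWeight

variable {σ R : Type*}

def monomialWeight [CommMonoid R] (w : σ → R) (d : σ →₀ ℕ) : R :=
  d.prod fun v k => w v ^ k

theorem monomialWeight_add [CommMonoid R] (w : σ → R) (a b : σ →₀ ℕ) :
    monomialWeight w (a + b) = monomialWeight w a * monomialWeight w b :=
  Finsupp.prod_add_index' (fun _ => pow_zero _) fun _ _ _ => pow_add _ _ _

theorem monomialWeight_mul [CommMonoid R] (w w' : σ → R) (d : σ →₀ ℕ) :
    monomialWeight (w * w') d = monomialWeight w d * monomialWeight w' d := by
  simp only [monomialWeight, Pi.mul_apply, mul_pow, Finsupp.prod_mul]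

theorem monomialWeight_one [CommMonoid R] (d : σ →₀ ℕ) :
    monomialWeight (1 : σ → R) d = 1 := by
  simp [monomialWeight]

theorem monomialWeight_mapDomain {τ : Type*} [CommMonoid R] (w : τ → R) (f : σ → τ)
    (d : σ →₀ ℕ) : monomialWeight w (d.mapDomain f) = monomialWeight (w ∘ f) d :=
  Finsupp.prod_mapDomain_index (fun _ => pow_zero _) fun _ _ _ => pow_add _ _ _

theorem monomialWeight_eq_prod_toMultiset [CommMonoid R] (w : σ → R) (d : σ →₀ ℕ) :
    monomialWeight w d = (d.toMultiset.map w).prod := by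
  rw [Finsupp.toMultiset_map, Finsupp.prod_toMultiset, monomialWeight,
    Finsupp.prod_mapDomain_index (fun _ => pow_zero _) fun _ _ _ => pow_add _ _ _]

theorem aeval_C_mul_X_monomial [CommSemiring R] (w : σ → R) (d : σ →₀ ℕ) (c : R) :
    aeval (fun v => C (w v) * X v) (monomial d c) = monomial d (monomialWeight w d * c) := by
  simp only [aeval_monomial, mul_pow, Finsupp.prod_mul, ← map_pow, ← map_finsuppProd,
    ← monomial_eq, monomialWeight, algebraMap_eq, C_mul_monomial, mul_comm c]

theorem coeff_aeval_C_mul_X [CommSemiring R] (w : σ → R) (f : MvPolynomial σ R)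
    (d : σ →₀ ℕ) :
    coeff d (aeval (fun v => C (w v) * X v) f) = monomialWeight w d * coeff d f := by
  induction f using MvPolynomial.induction_on' with
  | monomial e c =>
    classical
    rw [aeval_C_mul_X_monomial, coeff_monomial, coeff_monomial]
    split_ifs with h
    · rw [h]
    · rw [mul_zero]
  | add f g hf hg => rw [map_add, coeff_add, coeff_add, hf, hg, mul_add]

theorem monomialWeight_eq_one_of_aeval_eq [CommRing R] [IsDomain R] {w : σ → R}
    {f : MvPolynomial σ R} (hf : aeval (fun v => C (w v) * X v) f = f) {d : σ →₀ ℕ}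
    (hd : d ∈ f.support) : monomialWeight w d = 1 := by
  have h := coeff_aeval_C_mul_X w f d
  rwa [hf, eq_comm, mul_eq_right₀ (mem_support_iff.mp hd)] at h

theorem Multiset.exists_le_prod_map_eq_one [CommRing R] [IsDomain R] {p : ℕ} (hp : 0 < p)
    {w : σ → R} (hw : ∀ v, w v ^ p = 1) {m : Multiset σ} (hm : p ≤ Multiset.card m) :
    ∃ t ≤ m, 0 < Multiset.card t ∧ Multiset.card t ≤ p ∧ (t.map w).prod = 1 := by
  set l := m.toList
  have hl : p ≤ l.length := by rwa [Multiset.length_toList]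
  set P : ℕ → R := fun k => ((l.take k).map w).prod
  have hP : ∀ k, P k ^ p = 1 := fun k => by
    simpa [P, hw] using
      (Multiset.prod_map_pow (m := (l.take k : Multiset σ)) (f := w) (n := p)).symm
  have hmaps : ∀ k ∈ Finset.range (p + 1), P k ∈ Polynomial.nthRootsFinset p (1 : R) :=
    fun k _ => (Polynomial.mem_nthRootsFinset hp 1).mpr (hP k)
  have hcard : (Polynomial.nthRootsFinset p (1 : R)).card < (Finset.range (p + 1)).card := by
    classical
    rw [Finset.card_range, Nat.lt_succ_iff, Polynomial.nthRootsFinset_def]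
    exact (Multiset.toFinset_card_le _).trans (Polynomial.card_nthRoots p 1)
  obtain ⟨i, hi, j, hj, hij, hPij⟩ := Finset.exists_ne_map_eq_of_card_lt_of_maps_to hcard hmaps
  wlog hlt : i < j generalizing i j
  · exact this j hj i hi hij.symm hPij.symm (by omega)
  rw [Finset.mem_range] at hi hj
  set t := (l.drop i).take (j - i)
  have hPj : P j = P i * (t.map w).prod := by
    simp only [P, t, ← List.prod_append, ← List.map_append, ← List.take_add,
      Nat.add_sub_cancel' hlt.le]
  have hPi : P i ≠ 0 := fun h => by simpa [h, zero_pow hp.ne'] using hP i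
  refine ⟨t, ?_, ?_, ?_, ?_⟩
  · rw [← Multiset.coe_toList m, Multiset.coe_le]
    exact ((List.take_sublist _ _).trans (List.drop_sublist _ _)).subperm
  · simp only [Multiset.coe_card, t, List.length_take, List.length_drop]; omega
  · simp only [Multiset.coe_card, t, List.length_take, List.length_drop]; omega
  · rw [Multiset.map_coe, Multiset.prod_coe]
    exact (mul_eq_left₀ hPi).mp (hPj ▸ hPij).symm

theorem exists_le_monomialWeight_eq_one [CommRing R] [IsDomain R] {p : ℕ} (hp : 0 < p)
    {w : σ → R} (hw : ∀ v, w v ^ p = 1) {d : σ →₀ ℕ} (hd : p ≤ d.degree) :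
    ∃ e ≤ d, 0 < e.degree ∧ e.degree ≤ p ∧ monomialWeight w e = 1 := by
  classical
  have hcard (e : σ →₀ ℕ) : Multiset.card e.toMultiset = e.degree :=
    Finsupp.card_toMultiset e
  obtain ⟨t, htd, ht0, htp, ht1⟩ :=
    Multiset.exists_le_prod_map_eq_one hp hw (m := d.toMultiset) (hcard d ▸ hd)
  refine ⟨Multiset.toFinsupp t, ?_, ?_, ?_, ?_⟩
  · simpa using Multiset.toFinsupp_strictMono.monotone htd
  · rwa [← hcard, Multiset.toFinsupp_toMultiset]
  · rwa [← hcard, Multiset.toFinsupp_toMultiset]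
  · rwa [monomialWeight_eq_prod_toMultiset, Multiset.toFinsupp_toMultiset]

end MonomialWeight

section DihedralAction

variable {F : Type*} [Field F] {r s : ℕ}

theorem dswap_involutive : Function.Involutive (dswap : DVar r s → DVar r s) := by
  rintro ((i | i) | (j | j)) <;> rfl

theorem dswap_ne_self (v : DVar r s) : dswap v ≠ v := by
  rcases v with (i | i) | (j | j) <;> simp [dswap]

def swapExp (d : DVar r s →₀ ℕ) : DVar r s →₀ ℕ := d.mapDomain dswap

theorem swapExp_apply (d : DVar r s →₀ ℕ) (v : DVar r s) : swapExp d v = d (dswap v) := by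
  conv_lhs => rw [← dswap_involutive v]
  exact Finsupp.mapDomain_apply dswap_involutive.injective d (dswap v)

theorem swapExp_involutive : Function.Involutive (swapExp : (DVar r s →₀ ℕ) → _) := by
  intro d
  ext v
  rw [swapExp_apply, swapExp_apply, dswap_involutive]

theorem swapExp_add (a b : DVar r s →₀ ℕ) : swapExp (a + b) = swapExp a + swapExp b :=
  Finsupp.mapDomain_add

theorem degree_swapExp (d : DVar r s →₀ ℕ) : (swapExp d).degree = d.degree :=
  Finsupp.degree_mapDomain dswap d

theorem sigmaMap_monomial (d : DVar r s →₀ ℕ) (c : F) :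
    sigmaMap F r s (monomial d c) = monomial (swapExp d) c :=
  rename_monomial _ _ _

theorem coeff_swapExp_of_sigmaMap_eq {f : MvPolynomial (DVar r s) F} (hf : sigmaMap F r s f = f)
    (d : DVar r s →₀ ℕ) : coeff (swapExp d) f = coeff d f :=
  (congrArg (coeff (swapExp d)) hf).symm.trans
    (coeff_rename_mapDomain dswap dswap_involutive.injective f d)

variable (lam : Fin r → F)

theorem rhoMap_monomial (d : DVar r s →₀ ℕ) (c : F) :
    rhoMap F r s lam (monomial d c) = monomial d (monomialWeight (rhoCoeff lam) d * c) :=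
  aeval_C_mul_X_monomial _ d c

theorem rhoCoeff_dswap_mul_rhoCoeff (hlam : ∀ i, lam i ≠ 0) (v : DVar r s) :
    rhoCoeff lam (dswap v) * rhoCoeff lam v = 1 := by
  rcases v with (i | i) | (j | j)
  · exact inv_mul_cancel₀ (hlam i)
  · exact mul_inv_cancel₀ (hlam i)
  · exact one_mul 1
  · exact one_mul 1

theorem monomialWeight_swapExp (hlam : ∀ i, lam i ≠ 0) {d : DVar r s →₀ ℕ}
    (hd : monomialWeight (rhoCoeff lam) d = 1) :
    monomialWeight (rhoCoeff lam) (swapExp d) = 1 := by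
  have h : rhoCoeff lam ∘ dswap * rhoCoeff lam = (1 : DVar r s → F) :=
    funext (rhoCoeff_dswap_mul_rhoCoeff lam hlam)
  have := monomialWeight_mul (rhoCoeff lam ∘ dswap) (rhoCoeff lam) d
  rw [h, monomialWeight_one, hd, mul_one, ← monomialWeight_mapDomain] at this
  exact this.symm

theorem rhoCoeff_pow {p : ℕ} (hlam : ∀ i, lam i ^ p = 1) (v : DVar r s) :
    rhoCoeff lam v ^ p = 1 := by
  rcases v with (i | i) | j
  · exact hlam i
  · exact (inv_pow (lam i) p).trans (by rw [hlam i, inv_one])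
  · exact one_pow p

end DihedralAction

section LowDegreeGenerators

variable {F : Type*} [Field F] {r s p : ℕ} (lam : Fin r → F)

def lowDegreeInvariants (F : Type*) [Field F] (r s p : ℕ) (lam : Fin r → F) :
    Set (MvPolynomial (DVar r s) F) :=
  {f | sigmaMap F r s f = f ∧ rhoMap F r s lam f = f ∧
    ∃ d : ℕ, 0 < d ∧ d ≤ p ∧ f.IsHomogeneous d}

theorem X_mul_X_dswap_mem_lowDegreeInvariants (hlam : ∀ i, lam i ≠ 0) (hp : 2 ≤ p)
    (v : DVar r s) :
    X v * X (dswap v) ∈ lowDegreeInvariants F r s p lam := by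
  refine ⟨?_, ?_, 2, two_pos, hp, (isHomogeneous_X F v).mul (isHomogeneous_X F _)⟩
  · rw [map_mul, sigmaMap, rename_X, rename_X, dswap_involutive, mul_comm]
  · calc rhoMap F r s lam (X v * X (dswap v))
        = C (rhoCoeff lam (dswap v) * rhoCoeff lam v) * (X v * X (dswap v)) := by
          rw [map_mul, rhoMap, aeval_X, aeval_X, map_mul]; ring
      _ = X v * X (dswap v) := by rw [rhoCoeff_dswap_mul_rhoCoeff lam hlam, map_one, one_mul]

theorem monomial_add_monomial_swapExp_mem_lowDegreeInvariants (hlam : ∀ i, lam i ≠ 0)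
    {d : DVar r s →₀ ℕ} (hd0 : d ≠ 0) (hdp : d.degree ≤ p)
    (hd : monomialWeight (rhoCoeff lam) d = 1) :
    monomial d 1 + monomial (swapExp d) 1 ∈ lowDegreeInvariants F r s p lam := by
  refine ⟨?_, ?_, d.degree, ?_, hdp, ?_⟩
  · rw [map_add, sigmaMap_monomial, sigmaMap_monomial, swapExp_involutive, add_comm]
  · rw [map_add, rhoMap_monomial, rhoMap_monomial, hd, monomialWeight_swapExp lam hlam hd, one_mul]
  · exact Nat.pos_of_ne_zero ((Finsupp.degree_eq_zero_iff d).not.mpr hd0)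
  · exact (isHomogeneous_monomial 1 rfl).add (isHomogeneous_monomial 1 (degree_swapExp d))

theorem monomial_mem_span_of_swapExp_eq (hlam : ∀ i, lam i ≠ 0) (hp : 2 ≤ p)
    {d : DVar r s →₀ ℕ} (hd0 : d ≠ 0) (hd : swapExp d = d) :
    monomial d 1 ∈ Ideal.span (lowDegreeInvariants F r s p lam) := by
  obtain ⟨v, hv⟩ := Finsupp.ne_iff.mp hd0
  have hvv : d (dswap v) = d v := by rw [← swapExp_apply, hd]
  have hdvd : X v * X (dswap v) ∣ (monomial d 1 : MvPolynomial (DVar r s) F) := by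
    rw [X, X, monomial_mul, monomial_dvd_monomial]
    refine ⟨Or.inr fun u => ?_, by rw [mul_one]⟩
    have := dswap_ne_self v
    simp only [Finsupp.add_apply, Finsupp.single_apply]
    split_ifs <;> subst_vars <;> simp_all <;> omega
  exact Ideal.mem_of_dvd _ hdvd
    (Ideal.subset_span (X_mul_X_dswap_mem_lowDegreeInvariants lam hlam hp v))

theorem monomial_add_monomial_swapExp_mem_span [CharP F 2] (hp : 0 < p)
    (hlam : ∀ i, lam i ^ p = 1) {d : DVar r s →₀ ℕ} (hd0 : d ≠ 0)
    (hd : monomialWeight (rhoCoeff lam) d = 1) :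
    monomial d 1 + monomial (swapExp d) 1 ∈ Ideal.span (lowDegreeInvariants F r s p lam) := by
  have hlam0 (i : Fin r) : lam i ≠ 0 := (IsUnit.of_pow_eq_one (hlam i) hp.ne').ne_zero
  induction hn : d.degree using Nat.strong_induction_on generalizing d with
  | _ n ih =>
    by_cases hdp : d.degree ≤ p
    · exact Ideal.subset_span
        (monomial_add_monomial_swapExp_mem_lowDegreeInvariants lam hlam0 hd0 hdp hd)
    obtain ⟨e, hed, he0, hep, he⟩ :=
      exists_le_monomialWeight_eq_one hp (rhoCoeff_pow lam hlam) (le_of_not_ge hdp)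
    set e' := d - e
    have hsplit : d = e + e' := (add_tsub_cancel_of_le hed).symm
    have hdeg : d.degree = e.degree + e'.degree := by rw [hsplit, map_add]
    have he' : monomialWeight (rhoCoeff lam) e' = 1 := by
      rwa [hsplit, monomialWeight_add, he, one_mul] at hd
    have he'0 : e' ≠ 0 := fun h => by simp only [h, map_zero] at hdeg; omega
    have hmul (a b : DVar r s →₀ ℕ) :
        (monomial (a + b) 1 : MvPolynomial (DVar r s) F) = monomial a 1 * monomial b 1 := by
      rw [monomial_mul, mul_one]
    have key : (monomial d 1 + monomial (swapExp d) 1 : MvPolynomial (DVar r s) F) =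
        (monomial e 1 + monomial (swapExp e) 1) * monomial e' 1 +
          monomial (swapExp e) 1 * (monomial e' 1 + monomial (swapExp e') 1) := by
      rw [hsplit, swapExp_add, hmul, hmul]
      linear_combination (-(monomial (swapExp e) 1 * monomial e' 1 : MvPolynomial (DVar r s) F)) *
        (CharTwo.two_eq_zero : (2 : MvPolynomial (DVar r s) F) = 0)
    rw [key]
    refine add_mem (Ideal.mul_mem_right _ _ (Ideal.subset_span ?_))
      (Ideal.mul_mem_left _ _ (ih _ (by omega) he'0 he' rfl))
    exact monomial_add_monomial_swapExp_mem_lowDegreeInvariants lam hlam0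
      (fun h => by simp [h] at he0) hep he

end LowDegreeGenerators

section Decomposition

variable {F : Type*} [Field F] {r s p : ℕ} (lam : Fin r → F)

def orbitSum (F : Type*) [Field F] (d : DVar r s →₀ ℕ) : MvPolynomial (DVar r s) F :=
  ∑ e ∈ {d, swapExp d}, monomial e 1

theorem coeff_orbitSum (d u : DVar r s →₀ ℕ) :
    coeff u (orbitSum F d) = if u ∈ ({d, swapExp d} : Finset _) then 1 else 0 := by
  simp only [orbitSum, coeff_sum, coeff_monomial, Finset.sum_ite_eq']

theorem orbitSum_mem_span [CharP F 2] (hp : 2 ≤ p) (hlam : ∀ i, lam i ^ p = 1)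
    {d : DVar r s →₀ ℕ} (hd0 : d ≠ 0) (hd : monomialWeight (rhoCoeff lam) d = 1) :
    orbitSum F d ∈ Ideal.span (lowDegreeInvariants F r s p lam) := by
  by_cases hfix : swapExp d = d
  · have hlam0 (i : Fin r) : lam i ≠ 0 := (IsUnit.of_pow_eq_one (hlam i) (by omega)).ne_zero
    rw [orbitSum, hfix, Finset.pair_eq_singleton, Finset.sum_singleton]
    exact monomial_mem_span_of_swapExp_eq lam hlam0 hp hd0 hfix
  · rw [orbitSum, Finset.sum_pair (Ne.symm hfix)]
    exact monomial_add_monomial_swapExp_mem_span lam (by omega) hlam hd0 hd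

theorem mem_span_lowDegreeInvariants [CharP F 2] (hp : 2 ≤ p) (hlam : ∀ i, lam i ^ p = 1)
    (f : MvPolynomial (DVar r s) F) (hσ : ∀ d, coeff (swapExp d) f = coeff d f)
    (hρ : ∀ d ∈ f.support, d ≠ 0 ∧ monomialWeight (rhoCoeff lam) d = 1) :
    f ∈ Ideal.span (lowDegreeInvariants F r s p lam) := by
  induction hn : f.support.card using Nat.strong_induction_on generalizing f with
  | _ n ih =>
    obtain rfl | ⟨d, hd⟩ := f.support.eq_empty_or_nonempty.imp_left support_eq_empty.mp
    · exact zero_mem _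
    set O : Finset (DVar r s →₀ ℕ) := {d, swapExp d}
    set g := f - C (coeff d f) * orbitSum F d
    have hg (u : DVar r s →₀ ℕ) : coeff u g = if u ∈ O then 0 else coeff u f := by
      simp only [g, coeff_sub, coeff_C_mul, coeff_orbitSum]
      split_ifs with hu
      · rcases Finset.mem_insert.mp hu with rfl | hu <;> simp_all
      · simp
    have hgf : g.support ⊆ f.support.erase d := fun u hu => by
      rw [mem_support_iff, hg] at hu
      split_ifs at hu with huO
      · exact absurd rfl hu
      · exact Finset.mem_erase.mpr
          ⟨fun h => huO (h ▸ Finset.mem_insert_self _ _), mem_support_iff.mpr hu⟩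
    have hgσ (u : DVar r s →₀ ℕ) : coeff (swapExp u) g = coeff u g := by
      have hO : swapExp u ∈ O ↔ u ∈ O := by
        simp only [O, Finset.mem_insert, Finset.mem_singleton, swapExp_involutive.eq_iff,
          swapExp_involutive d, or_comm]
      simp only [hg, hO, hσ]
    have hlt : g.support.card < n :=
      hn ▸ (Finset.card_le_card hgf).trans_lt (Finset.card_erase_lt_of_mem hd)
    have hgmem := ih _ hlt g hgσ (fun u hu => hρ u (Finset.mem_of_mem_erase (hgf hu))) rfl
    have hf : f = g + C (coeff d f) * orbitSum F d := (sub_add_cancel _ _).symm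
    rw [hf]
    exact add_mem hgmem
      (Ideal.mul_mem_left _ _ (orbitSum_mem_span lam hp hlam (hρ d hd).1 (hρ d hd).2))

end Decomposition

theorem hilbertIdeal_generated_in_degrees_le_p_general
    {F : Type*} [Field F] [CharP F 2] {r s p : ℕ} (hp : 3 ≤ p)
    (lam : Fin r → F) (hlam : ∀ i, lam i ^ p = 1 ∧ lam i ≠ 1) :
    HilbertIdeal F r s lam =
      Ideal.span {f : MvPolynomial (DVar r s) F |
        sigmaMap F r s f = f ∧ rhoMap F r s lam f = f ∧
        ∃ d : ℕ, 0 < d ∧ d ≤ p ∧ f.IsHomogeneous d} := by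
  refine le_antisymm (Ideal.span_le.mpr ?_) (Ideal.span_mono ?_)
  · rintro f ⟨hσ, hρ, hf0⟩
    refine mem_span_lowDegreeInvariants lam (by omega) (fun i => (hlam i).1) f
      (coeff_swapExp_of_sigmaMap_eq hσ) fun d hd => ⟨?_, ?_⟩
    · rintro rfl
      exact mem_support_iff.mp hd hf0
    · exact monomialWeight_eq_one_of_aeval_eq hρ hd
  · rintro f ⟨hσ, hρ, n, hn, -, hf⟩
    exact ⟨hσ, hρ, hf.coeff_eq_zero (by rw [map_zero]; omega)⟩

/-- For `p ≥ 3` an odd integer, the Hilbert ideal `I_H` equals the ideal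
generated by the homogeneous `G`-invariant polynomials `f` with `0 < deg f ≤ p`. -/
theorem hilbertIdeal_generated_in_degrees_le_p
    {F : Type*} [Field F] [CharP F 2] {r s p : ℕ} (hp : 3 ≤ p) (hodd : Odd p)
    (ζ : F) (hζ : IsPrimitiveRoot ζ p)
    (lam : Fin r → F) (hlam : ∀ i, lam i ^ p = 1 ∧ lam i ≠ 1) :
    HilbertIdeal F r s lam =
      Ideal.span {f : MvPolynomial (DVar r s) F |
        sigmaMap F r s f = f ∧ rhoMap F r s lam f = f ∧
        ∃ d : ℕ, 0 < d ∧ d ≤ p ∧ f.IsHomogeneous d} :=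
  hilbertIdeal_generated_in_degrees_le_p_general hp lam hlam
end
end

section
/- Let p be an odd prime. The ideal I of R generated by all products u·m, where m is a ρ-invariant monomial and u is a variable dividing m, equals the ideal I' of R generated by all products u·m, where m is a ρ-invariant monomial of degree at most p and u is a variable dividing m. -/
open MvPolynomial

noncomputable section

/-!
A monomial `x^d` is `ρ`-invariant iff `∏ v, (rhoCoeff lam v)^(d v) = 1`: a product-one
condition on the multiset of variables of `x^d`, weighted in the group of `p`-th roots of unity,
which has at most `p` elements. Among `p` weights, two of the `p + 1` prefix products coincide, so
any longer product-one multiset containing `u` has a nonempty product-one part avoiding one copy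
of `u`. Deleting such parts leaves an invariant divisor `m'` of `m` with `u ∣ m'` and
`deg m' ≤ p`, and `u * m = (m / m') * (u * m')`.
-/

section ProductOne

variable {V G : Type*} [CommGroup G] [Finite G] (c : V → G)

theorem List.exists_eq_append_append_ne_nil_prod_map_eq_one (L : List V)
    (hL : Nat.card G ≤ L.length) :
    ∃ l₁ l₂ l₃, L = l₁ ++ l₂ ++ l₃ ∧ l₂ ≠ [] ∧ (l₂.map c).prod = 1 := by
  have := Fintype.ofFinite G
  let prefixProd : Fin (Nat.card G + 1) → G := fun i => ((L.take i).map c).prod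
  obtain ⟨a, b, hab, heq⟩ := Fintype.exists_ne_map_eq_of_card_lt prefixProd
    (by simp [Nat.card_eq_fintype_card])
  wlog hlt : a < b generalizing a b
  · exact this b a hab.symm heq.symm (lt_of_le_of_ne (not_lt.mp hlt) hab.symm)
  rw [Fin.lt_def] at hlt
  refine ⟨(L.take b).take a, (L.take b).drop a, L.drop b, by simp, ?_, ?_⟩
  · simp only [ne_eq, List.drop_eq_nil_iff, List.length_take, not_le]
    omega
  · have hsplit := congrArg (fun l => (l.map c).prod) (List.take_append_drop a (L.take b))
    simp only [List.map_append, List.prod_append, List.take_take, min_eq_left hlt.le] at hsplit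
    exact mul_eq_left.mp (hsplit.trans heq.symm)

theorem Multiset.exists_le_ne_zero_prod_map_eq_one {M : Multiset V} (hM : Nat.card G ≤ card M) :
    ∃ S ≤ M, S ≠ 0 ∧ (S.map c).prod = 1 := by
  induction M using Quot.inductionOn with | h L => ?_
  obtain ⟨l₁, l₂, l₃, rfl, hne, hprod⟩ :=
    L.exists_eq_append_append_ne_nil_prod_map_eq_one c hM
  exact ⟨l₂, coe_le.mpr (List.infix_append l₁ l₂ l₃).sublist.subperm, by simpa using hne,
    by simpa using hprod⟩

theorem Multiset.exists_le_card_lt_mul_prod_map_eq_one (u : V) (M : Multiset V)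
    (hM : c u * (M.map c).prod = 1) :
    ∃ N ≤ M, card N < Nat.card G ∧ c u * (N.map c).prod = 1 := by
  induction M using Multiset.strongInductionOn with | ih M ih => ?_
  by_cases hcard : card M < Nat.card G
  · exact ⟨M, le_rfl, hcard, hM⟩
  obtain ⟨S, hSM, hS0, hS⟩ := exists_le_ne_zero_prod_map_eq_one c (not_lt.mp hcard)
  obtain ⟨T, rfl⟩ := le_iff_exists_add.mp hSM
  obtain ⟨N, hNT, hN⟩ := ih T (lt_add_of_pos_left T (pos_iff_ne_zero.mpr hS0))
    (by simpa [hS] using hM)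
  exact ⟨N, hNT.trans (le_add_left T S), hN⟩

theorem Multiset.exists_le_mem_card_le_prod_map_eq_one {u : V} {M : Multiset V} (hu : u ∈ M)
    (hM : (M.map c).prod = 1) :
    ∃ N ≤ M, u ∈ N ∧ card N ≤ Nat.card G ∧ (N.map c).prod = 1 := by
  obtain ⟨M, rfl⟩ := exists_cons_of_mem hu
  obtain ⟨N, hNM, hcard, hN⟩ :=
    exists_le_card_lt_mul_prod_map_eq_one c u M (by simpa using hM)
  exact ⟨u ::ₘ N, cons_le_cons u hNM, mem_cons_self u N, by simpa using hcard,
    by simpa using hN⟩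

theorem Finsupp.exists_le_sum_le_prod_pow_eq_one {u : V} {d : V →₀ ℕ} (hu : d u ≠ 0)
    (hd : d.prod (fun v n => c v ^ n) = 1) :
    ∃ e ≤ d, e u ≠ 0 ∧ (e.sum fun _ => id) ≤ Nat.card G ∧
      e.prod (fun v n => c v ^ n) = 1 := by
  classical
  have prod_eq (f : V →₀ ℕ) : (f.toMultiset.map c).prod = f.prod fun v n => c v ^ n := by
    rw [toMultiset_map, prod_toMultiset, prod_mapDomain_index (fun _ => pow_zero _)
      (fun _ _ _ => pow_add _ _ _)]
  obtain ⟨N, hNd, huN, hcard, hN⟩ := Multiset.exists_le_mem_card_le_prod_map_eq_one c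
    ((mem_toMultiset d u).mpr (mem_support_iff.mpr hu)) ((prod_eq d).trans hd)
  obtain ⟨e, rfl⟩ := orderIsoMultiset.surjective N
  refine ⟨e, orderIsoMultiset.le_iff_le.mp hNd, ?_, ?_, (prod_eq e).symm.trans hN⟩
  · simpa using huN
  · simpa using hcard

end ProductOne

section Rho

variable {F : Type*} [Field F] {r s p : ℕ} (lam : Fin r → F)

theorem rhoMap_monomial_one (d : DVar r s →₀ ℕ) :
    rhoMap F r s lam (monomial d 1) =
      C (d.prod fun v n => rhoCoeff lam v ^ n) * monomial d 1 := by
  classical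
  rw [rhoMap, aeval_monomial, map_one, one_mul, monomial_eq, C_1, one_mul]
  unfold Finsupp.prod
  rw [map_prod, ← Finset.prod_mul_distrib]
  exact Finset.prod_congr rfl fun v _ => by dsimp only; rw [mul_pow, C_pow]

theorem rhoMap_monomial_one_eq_self_iff (d : DVar r s →₀ ℕ) :
    rhoMap F r s lam (monomial d 1) = monomial d 1 ↔
      (d.prod fun v n => rhoCoeff lam v ^ n) = 1 := by
  rw [rhoMap_monomial_one, ← sub_eq_zero, ← sub_one_mul, mul_eq_zero, ← C_1, ← map_sub,
    C_eq_zero, sub_eq_zero, or_iff_left (monomial_eq_zero.not.mpr one_ne_zero)]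

theorem rhoCoeff_pow_eq_one (hlam : ∀ i, lam i ^ p = 1) (v : DVar r s) :
    rhoCoeff lam v ^ p = 1 := by
  rcases v with (i | i) | j
  · exact hlam i
  · exact (inv_pow (lam i) p).trans (by rw [hlam i, inv_one])
  · exact one_pow p

theorem exists_le_totalDegree_le_rhoMap_monomial_eq_self [NeZero p] (hlam : ∀ i, lam i ^ p = 1)
    {d : DVar r s →₀ ℕ} {u : DVar r s} (hu : d u ≠ 0)
    (hd : rhoMap F r s lam (monomial d 1) = monomial d 1) :
    ∃ e ≤ d, e u ≠ 0 ∧ (monomial e (1 : F)).totalDegree ≤ p ∧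
      rhoMap F r s lam (monomial e 1) = monomial e 1 := by
  let c (v : DVar r s) : rootsOfUnity p F :=
    rootsOfUnity.mkOfPowEq _ (rhoCoeff_pow_eq_one lam hlam v)
  let φ : rootsOfUnity p F →* F := (Units.coeHom F).comp (rootsOfUnity p F).subtype
  have invariant_iff (e : DVar r s →₀ ℕ) : rhoMap F r s lam (monomial e 1) = monomial e 1 ↔
      e.prod (fun v n => c v ^ n) = 1 := by
    have hφ : φ (e.prod fun v n => c v ^ n) = e.prod fun v n => rhoCoeff lam v ^ n := by
      simp only [map_finsuppProd, map_pow]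
      rfl
    rw [rhoMap_monomial_one_eq_self_iff, ← hφ,
      (injective_iff_map_eq_one' φ).mp (Units.val_injective.comp Subtype.val_injective)]
  obtain ⟨e, hed, heu, hdeg, he⟩ :=
    Finsupp.exists_le_sum_le_prod_pow_eq_one c hu ((invariant_iff d).mp hd)
  exact ⟨e, hed, heu, (totalDegree_monomial_le e 1).trans (hdeg.trans (card_rootsOfUnity F p)),
    (invariant_iff e).mpr he⟩

end Rho

theorem ideal_var_mul_monomial_eq_bounded_degree_general
    {F : Type*} [Field F] {r s p : ℕ} (hp : p.Prime)
    (lam : Fin r → F) (hlam : ∀ i, lam i ^ p = 1 ∧ lam i ≠ 1) :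
    Ideal.span {f : MvPolynomial (DVar r s) F |
        ∃ (m : MvPolynomial (DVar r s) F) (u : DVar r s),
          IsMonomial m ∧ rhoMap F r s lam m = m ∧ X u ∣ m ∧ f = X u * m} =
    Ideal.span {f : MvPolynomial (DVar r s) F |
        ∃ (m : MvPolynomial (DVar r s) F) (u : DVar r s),
          IsMonomial m ∧ rhoMap F r s lam m = m ∧ m.totalDegree ≤ p ∧ X u ∣ m ∧ f = X u * m} := by
  have : NeZero p := ⟨hp.ne_zero⟩
  refine le_antisymm (Ideal.span_le.mpr ?_) (Ideal.span_mono ?_)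
  · rintro _ ⟨_, u, ⟨d, rfl⟩, hd, hud, rfl⟩
    have hu : d u ≠ 0 := (X_dvd_monomial.mp hud).resolve_left one_ne_zero
    obtain ⟨e, hed, heu, hdeg, he⟩ :=
      exists_le_totalDegree_le_rhoMap_monomial_eq_self lam (fun i => (hlam i).1) hu hd
    have hsplit : X u * monomial d (1 : F) = monomial (d - e) 1 * (X u * monomial e 1) := by
      rw [mul_left_comm, monomial_mul, one_mul, tsub_add_cancel_of_le hed]
    rw [hsplit]
    exact Ideal.mul_mem_left _ _ (Ideal.subset_span
      ⟨_, u, ⟨e, rfl⟩, he, hdeg, X_dvd_monomial.mpr (Or.inr heu), rfl⟩)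
  · rintro _ ⟨m, u, hm, hρ, -, hum, rfl⟩
    exact ⟨m, u, hm, hρ, hum, rfl⟩

/-- For `p` an odd prime, the ideal generated by all products `u·m` with `m` a
`ρ`-invariant monomial and `u` a variable dividing `m` equals the ideal generated by those
products with `deg m ≤ p`. -/
theorem ideal_var_mul_monomial_eq_bounded_degree
    {F : Type*} [Field F] [CharP F 2] {r s p : ℕ} (hp : p.Prime) (hodd : Odd p)
    (ζ : F) (hζ : IsPrimitiveRoot ζ p)
    (lam : Fin r → F) (hlam : ∀ i, lam i ^ p = 1 ∧ lam i ≠ 1) :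
    Ideal.span {f : MvPolynomial (DVar r s) F |
        ∃ (m : MvPolynomial (DVar r s) F) (u : DVar r s),
          IsMonomial m ∧ rhoMap F r s lam m = m ∧ X u ∣ m ∧ f = X u * m} =
    Ideal.span {f : MvPolynomial (DVar r s) F |
        ∃ (m : MvPolynomial (DVar r s) F) (u : DVar r s),
          IsMonomial m ∧ rhoMap F r s lam m = m ∧ m.totalDegree ≤ p ∧ X u ∣ m ∧ f = X u * m} :=
  ideal_var_mul_monomial_eq_bounded_degree_general hp lam hlam
end
end
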